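/- arXiv:1110.6782 — 3 statements merged into one kernel-verified Lean document; each statement's English description precedes it below -/
import Mathlib

section
/- Let h : ℕ → ℤ be a function and d an integer such that h(7) - 6·h(6) + 15·h(5) - 20·h(4) + 15·h(3) - 6·h(2) + h(1) = d and h(8) - 6·h(7) + 15·h(6) - 20·h(5) + 15·h(4) - 6·h(3) + h(2) = d. Suppose moreover that h(i) ≡ 0 (mod 9) for every i ∈ {1,2,4,5,7,8} (i.e., for i not divisible by 3). Then d ≡ 0 (mod 9). -/
/-! Modulo 9 only the terms `h 3` and `h 6` survive in the two alternating sums, so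
`d ≡ 15 h(3) - 6 h(6) ≡ 15 h(6) - 6 h(3)`. Subtracting gives `9 ∣ 21 (h(6) - h(3))`, hence
`h(6) ≡ h(3) (mod 3)`, and then `15 h(6) - 6 h(3) = 9 h(6) + 6 (h(6) - h(3)) ≡ 0 (mod 9)`. -/

theorem Int.nine_dvd_of_modEq_of_modEq {x y d : ℤ} (h₁ : d ≡ 15 * y - 6 * x [ZMOD 9])
    (h₂ : d ≡ 15 * x - 6 * y [ZMOD 9]) : 9 ∣ d := by
  have h21 : 9 ∣ 21 * (x - y) := by
    have := (h₁.symm.trans h₂).dvd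
    rwa [show 15 * x - 6 * y - (15 * y - 6 * x) = 21 * (x - y) by ring] at this
  have h3 : 3 ∣ x - y := by omega
  have h9 : 9 ∣ 15 * x - 6 * y := by
    obtain ⟨k, hk⟩ := h3
    exact ⟨x + 2 * k, by linear_combination 6 * hk⟩
  exact Int.modEq_zero_iff_dvd.1 (h₂.trans (Int.modEq_zero_iff_dvd.2 h9))

theorem divisibility_n6 (h : ℕ → ℤ) (d : ℤ)
    (e1 : h 7 - 6 * h 6 + 15 * h 5 - 20 * h 4 + 15 * h 3 - 6 * h 2 + h 1 = d)
    (e2 : h 8 - 6 * h 7 + 15 * h 6 - 20 * h 5 + 15 * h 4 - 6 * h 3 + h 2 = d)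
    (hmod : ∀ i ∈ ({1, 2, 4, 5, 7, 8} : Finset ℕ), (9 : ℤ) ∣ h i) :
    (9 : ℤ) ∣ d := by
  have h1 := hmod 1 (by simp)
  have h2 := hmod 2 (by simp)
  have h4 := hmod 4 (by simp)
  have h5 := hmod 5 (by simp)
  have h7 := hmod 7 (by simp)
  have h8 := hmod 8 (by simp)
  refine Int.nine_dvd_of_modEq_of_modEq (x := h 6) (y := h 3) ?_ ?_ <;>
    · unfold Int.ModEq
      omega
end

section
/- Let h : ℕ → ℤ and d an integer such that h(6) - 5·h(5) + 10·h(4) - 10·h(3) + 5·h(2) - h(1) = d and h(7) - 5·h(6) + 10·h(5) - 10·h(4) + 5·h(3) - h(2) = d, and suppose h(i) ≡ 0 (mod 9) for all i ∈ {1,2,4,5,7} (i.e., i not divisible by 3). Then d is divisible by 3. -/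
theorem divisibility_n5 (h : ℕ → ℤ) (d : ℤ)
    (e1 : h 6 - 5 * h 5 + 10 * h 4 - 10 * h 3 + 5 * h 2 - h 1 = d)
    (e2 : h 7 - 5 * h 6 + 10 * h 5 - 10 * h 4 + 5 * h 3 - h 2 = d)
    (hmod : ∀ i ∈ ({1, 2, 4, 5, 7} : Finset ℕ), (9 : ℤ) ∣ h i) :
    (3 : ℤ) ∣ d := by
  -- In `5 * e1 + e2` the term `h 6` cancels and `h 3`, the one unknown residue, gets the coefficient `-45`.
  have hcomb : 6 * d = h 7 - 15 * h 5 + 40 * h 4 - 45 * h 3 + 24 * h 2 - 5 * h 1 := by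
    linear_combination -5 * e1 - e2
  obtain ⟨a1, h1⟩ := hmod 1 (by decide)
  obtain ⟨a2, h2⟩ := hmod 2 (by decide)
  obtain ⟨a4, h4⟩ := hmod 4 (by decide)
  obtain ⟨a5, h5⟩ := hmod 5 (by decide)
  obtain ⟨a7, h7⟩ := hmod 7 (by decide)
  have h9 : (9 : ℤ) ∣ 6 * d :=
    ⟨a7 - 15 * a5 + 40 * a4 - 5 * h 3 + 24 * a2 - 5 * a1, by
      rw [hcomb, h1, h2, h4, h5, h7]; ring⟩
  omega
end

section
/- There is no polynomial H of degree at most 3 with rational coefficients such that H(1), ..., H(6) are non-decreasing, H(1) ∈ {0, 9}, H(2) ∈ {0, 45}, H(3) is a sum of a sub-multiset of [160, 160, 160, 160, 160] (i.e., H(3) ∈ {0, 160, 320, 480, 640, 800}), H(4) is a partial sum of the multiset [45, 180, 270], H(5) is a partial sum of the multiset [36, 90, 135, 216, 270, 540], H(6) is a partial sum of the multiset [1, 1, 1, 1, 15, 24, 80, 80, 240, 240, 240, 480, 480, 480, 640] (sums of arbitrary sub-multisets), and H(1) > 0. -/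
/-!
A polynomial of degree at most 3 has vanishing fourth finite difference, so
`h₁ - 4h₂ + 6h₃ - 4h₄ + h₅ = 0`. Positivity and monotonicity force `h₁ = 9` and `h₂ = 45`, hence
`h₅ = 4h₄ - 6h₃ + 171`. All admissible values of `h₄` and `h₅` are multiples of 9, so `3 ∣ h₃`;
together with `160 ∣ h₃` and `h₃ ≥ 45` this gives `h₃ ≥ 480`. But `h₄ ≤ h₅` means
`h₄ ≥ 2h₃ - 57 ≥ 903`, beyond the largest admissible value `495` of `h₄`.
-/

/-- `x` is a sum of a sub-multiset of `M`. -/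
def IsPartialSum (M : Multiset ℤ) (x : ℤ) : Prop :=
  ∃ s : Multiset ℤ, s ≤ M ∧ s.sum = x

open Polynomial

namespace IsPartialSum

variable {M : Multiset ℤ} {x : ℤ}

lemma dvd {d : ℤ} (h : IsPartialSum M x) (hd : ∀ a ∈ M, d ∣ a) : d ∣ x := by
  obtain ⟨s, hs, rfl⟩ := h
  exact Multiset.dvd_sum fun a ha ↦ hd a (Multiset.mem_of_le hs ha)

lemma le_sum (h : IsPartialSum M x) (hM : ∀ a ∈ M, 0 ≤ a) : x ≤ M.sum := by
  obtain ⟨s, hs, rfl⟩ := h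
  obtain ⟨t, rfl⟩ := Multiset.le_iff_exists_add.mp hs
  rw [Multiset.sum_add, le_add_iff_nonneg_right]
  exact Multiset.sum_nonneg fun a ha ↦ hM a (Multiset.mem_add.mpr (Or.inr ha))

lemma eq_zero_or_eq_of_singleton {a : ℤ} (h : IsPartialSum {a} x) : x = 0 ∨ x = a := by
  obtain ⟨s, hs, rfl⟩ := h
  rcases Multiset.le_singleton.mp hs with rfl | rfl <;> simp

end IsPartialSum

theorem Polynomial.eval_fourth_fwdDiff_eq_zero {R : Type*} [CommRing R] {P : R[X]}
    (hP : P.natDegree < 4) (x : R) :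
    P.eval x - 4 * P.eval (x + 1) + 6 * P.eval (x + 2) - 4 * P.eval (x + 3) + P.eval (x + 4)
      = 0 := by
  have h := congr_fun (fwdDiff_iter_eq_zero_of_degree_lt hP) x
  norm_num [fwdDiff_iter_eq_sum_shift, Finset.sum_range_succ, Nat.choose] at h
  linear_combination h

theorem no_cubic_hilbert_function :
    ¬ ∃ (H : Polynomial ℚ) (h : ℕ → ℤ),
      H.degree ≤ 3 ∧
      (∀ m ∈ Finset.Icc 1 6, (h m : ℚ) = H.eval (m : ℚ)) ∧
      (∀ i ∈ Finset.Icc 1 5, h i ≤ h (i + 1)) ∧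
      IsPartialSum {9} (h 1) ∧
      IsPartialSum {45} (h 2) ∧
      IsPartialSum {160, 160, 160, 160, 160} (h 3) ∧
      IsPartialSum {45, 180, 270} (h 4) ∧
      IsPartialSum {36, 90, 135, 216, 270, 540} (h 5) ∧
      IsPartialSum {4, 15, 24, 80, 80, 240, 240, 240, 480, 480, 480, 640} (h 6) ∧
      0 < h 1 := by
  rintro ⟨H, h, hdeg, heval, hmono, h1, h2, h3, h4, h5, -, hpos⟩
  have hfour : h 1 - 4 * h 2 + 6 * h 3 - 4 * h 4 + h 5 = 0 := by
    have hH := eval_fourth_fwdDiff_eq_zero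
      (Nat.lt_succ_of_le (natDegree_le_iff_degree_le.mpr hdeg)) (1 : ℚ)
    norm_num at hH
    have : ((h 1 - 4 * h 2 + 6 * h 3 - 4 * h 4 + h 5 : ℤ) : ℚ) = 0 := by
      push_cast
      rw [heval 1 (by decide), heval 2 (by decide), heval 3 (by decide), heval 4 (by decide),
        heval 5 (by decide)]
      exact_mod_cast hH
    exact_mod_cast this
  have m1 : h 1 ≤ h 2 := hmono 1 (by decide)
  have m2 : h 2 ≤ h 3 := hmono 2 (by decide)
  have m3 : h 3 ≤ h 4 := hmono 3 (by decide)
  have m4 : h 4 ≤ h 5 := hmono 4 (by decide)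
  have h1_eq : h 1 = 9 := h1.eq_zero_or_eq_of_singleton.resolve_left hpos.ne'
  have h2_eq : h 2 = 45 := h2.eq_zero_or_eq_of_singleton.resolve_left (by omega)
  have h3_dvd : 160 ∣ h 3 := h3.dvd (by decide)
  have h4_dvd : 9 ∣ h 4 := h4.dvd (by decide)
  have h5_dvd : 9 ∣ h 5 := h5.dvd (by decide)
  have h4_le : h 4 ≤ 495 := h4.le_sum (by decide)
  have h3_ge : 480 ≤ h 3 := by omega
  omega
end
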